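/- For l ∈ {1,2} let T be the ℚ(q)-linear automorphism of W with T(v_i ⊗ v_j) = v_i ⊗ v_j if i ≥ j and T(v_i ⊗ v_j) = a^l_{ji}·v_i ⊗ v_j if i < j, and let H_std be the ℚ(q)-linear endomorphism of W with H_std(v_i ⊗ v_i) = q^{-1}·v_i ⊗ v_i, H_std(v_i ⊗ v_j) = v_j ⊗ v_i + (q^{-1} - q)·v_i ⊗ v_j if i < j, and H_std(v_i ⊗ v_j) = v_j ⊗ v_i if i > j. Then T ∘ H_std = H^l ∘ T; in particular H^l is conjugate to the standard Hecke operator H_std. -/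
import Mathlib


noncomputable section

/-- The ground field `ℚ(q)`, rational functions over `ℚ`. -/
abbrev K : Type := RatFunc ℚ

/-- The variable `q ∈ ℚ(q)`. -/
def q : K := RatFunc.X

/-- The coefficients `a^l_{ij}`: for `i ≥ j`, `a^l_{ij} = q³` if `i-l` is odd and `j-l`
is even, and `q⁻¹` otherwise; for `i < j`, `a^l_{ij} = q⁻³` if `i-l` is even and `j-l`
is odd, and `q` otherwise. -/
def aco (l i j : ℤ) : K :=
  if j ≤ i then (if Odd (i - l) ∧ Even (j - l) then q ^ (3 : ℤ) else q⁻¹)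
  else (if Even (i - l) ∧ Odd (j - l) then q ^ (-3 : ℤ) else q)

/-- The free `ℚ(q)`-module `W` with basis `v_i ⊗ v_j` (`i, j ∈ ℤ`); the basis vector
`v_i ⊗ v_j` is `Finsupp.single (i, j) 1`. -/
abbrev Wmod : Type := (ℤ × ℤ) →₀ K

/-- The operator `H^l` on `W`:
`H^l(v_i ⊗ v_j) = a^l_{ij}·v_j ⊗ v_i + δ_{i<j}(q⁻¹ - q)·v_i ⊗ v_j`. -/
def Hop (l : ℤ) : Module.End K Wmod :=
  Finsupp.lsum K fun p : ℤ × ℤ =>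
    aco l p.1 p.2 • (Finsupp.lsingle (p.2, p.1) : K →ₗ[K] Wmod) +
      (if p.1 < p.2 then (q⁻¹ - q) • (Finsupp.lsingle p : K →ₗ[K] Wmod) else 0)

/-- The operator `T` on `W`: `T(v_i ⊗ v_j) = v_i ⊗ v_j` if `i ≥ j`, and
`T(v_i ⊗ v_j) = a^l_{ji}·v_i ⊗ v_j` if `i < j`. -/
def Tconj (l : ℤ) : Module.End K Wmod :=
  Finsupp.lsum K fun p : ℤ × ℤ =>
    if p.1 < p.2 then aco l p.2 p.1 • (Finsupp.lsingle p : K →ₗ[K] Wmod)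
    else (Finsupp.lsingle p : K →ₗ[K] Wmod)

/-- The standard Hecke operator `H_std` on `W`: `H_std(v_i ⊗ v_i) = q⁻¹·v_i ⊗ v_i`,
`H_std(v_i ⊗ v_j) = v_j ⊗ v_i + (q⁻¹ - q)·v_i ⊗ v_j` if `i < j`, and
`H_std(v_i ⊗ v_j) = v_j ⊗ v_i` if `i > j`. -/
def Hstd : Module.End K Wmod :=
  Finsupp.lsum K fun p : ℤ × ℤ =>
    if p.1 = p.2 then q⁻¹ • (Finsupp.lsingle p : K →ₗ[K] Wmod)
    else if p.1 < p.2 then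
      (Finsupp.lsingle (p.2, p.1) : K →ₗ[K] Wmod) +
        (q⁻¹ - q) • (Finsupp.lsingle p : K →ₗ[K] Wmod)
    else (Finsupp.lsingle (p.2, p.1) : K →ₗ[K] Wmod)

lemma q_ne_zero : q ≠ 0 := RatFunc.X_ne_zero

lemma aco_ne_zero (l i j : ℤ) : aco l i j ≠ 0 := by
  unfold aco
  split <;> split <;>
    simp [q_ne_zero, zpow_ne_zero, inv_ne_zero]

lemma aco_mul {l i j : ℤ} (h : i < j) : aco l j i * aco l i j = 1 := by
  unfold aco
  rw [if_pos h.le, if_neg (not_le.2 h)]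
  by_cases hp : Even (i - l) ∧ Odd (j - l)
  · rw [if_pos ⟨hp.2, hp.1⟩, if_pos hp, ← zpow_add₀ q_ne_zero]
    norm_num
  · rw [if_neg (fun h' => hp ⟨h'.2, h'.1⟩), if_neg hp]
    exact inv_mul_cancel₀ q_ne_zero

lemma aco_diag (l i : ℤ) : aco l i i = q⁻¹ := by
  unfold aco
  rw [if_pos le_rfl, if_neg]
  rintro ⟨h1, h2⟩
  exact (Int.not_odd_iff_even.2 h2) h1

def Tinv (l : ℤ) : Module.End K Wmod :=
  Finsupp.lsum K fun p : ℤ × ℤ =>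
    if p.1 < p.2 then (aco l p.2 p.1)⁻¹ • (Finsupp.lsingle p : K →ₗ[K] Wmod)
    else (Finsupp.lsingle p : K →ₗ[K] Wmod)

lemma Tconj_single (l : ℤ) (p : ℤ × ℤ) (b : K) :
    Tconj l (Finsupp.single p b) =
      if p.1 < p.2 then aco l p.2 p.1 • Finsupp.single p b else Finsupp.single p b := by
  simp only [Tconj, Finsupp.lsum_single]
  split <;> simp

lemma Tinv_single (l : ℤ) (p : ℤ × ℤ) (b : K) :
    Tinv l (Finsupp.single p b) =
      if p.1 < p.2 then (aco l p.2 p.1)⁻¹ • Finsupp.single p b else Finsupp.single p b := by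
  simp only [Tinv, Finsupp.lsum_single]
  split <;> simp

lemma Hstd_single (p : ℤ × ℤ) (b : K) :
    Hstd (Finsupp.single p b) =
      if p.1 = p.2 then q⁻¹ • Finsupp.single p b
      else if p.1 < p.2 then
        Finsupp.single (p.2, p.1) b + (q⁻¹ - q) • Finsupp.single p b
      else Finsupp.single (p.2, p.1) b := by
  simp only [Hstd, Finsupp.lsum_single]
  split
  · simp
  · split <;> simp

lemma Hop_single (l : ℤ) (p : ℤ × ℤ) (b : K) :
    Hop l (Finsupp.single p b) =
      aco l p.1 p.2 • Finsupp.single (p.2, p.1) b +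
        (if p.1 < p.2 then (q⁻¹ - q) • Finsupp.single p b else 0) := by
  simp only [Hop, Finsupp.lsum_single]
  split <;> simp

lemma Tinv_Tconj (l : ℤ) : Tinv l * Tconj l = 1 := by
  apply Finsupp.lhom_ext
  intro p b
  simp only [Module.End.mul_apply, Tconj_single, Module.End.one_apply]
  split_ifs with h
  · rw [map_smul, Tinv_single, if_pos h, smul_smul,
      mul_inv_cancel₀ (aco_ne_zero l p.2 p.1), one_smul]
  · rw [Tinv_single, if_neg h]

lemma Tconj_Tinv (l : ℤ) : Tconj l * Tinv l = 1 := by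
  apply Finsupp.lhom_ext
  intro p b
  simp only [Module.End.mul_apply, Tinv_single, Module.End.one_apply]
  split_ifs with h
  · rw [map_smul, Tconj_single, if_pos h, smul_smul,
      inv_mul_cancel₀ (aco_ne_zero l p.2 p.1), one_smul]
  · rw [Tconj_single, if_neg h]

/-- For `l ∈ {1,2}` the operator `T` is a linear automorphism of `W` and intertwines the
standard Hecke operator with `H^l`: `T ∘ H_std = H^l ∘ T`.  In particular `H^l` is
conjugate to `H_std`. -/
theorem Hop_conjugate_standard (l : ℤ) (hl : l = 1 ∨ l = 2) :
    Function.Bijective (Tconj l) ∧ Tconj l * Hstd = Hop l * Tconj l := by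
  constructor
  · exact Function.bijective_iff_has_inverse.2 ⟨Tinv l,
      fun x => DFunLike.congr_fun (Tinv_Tconj l) x,
      fun x => DFunLike.congr_fun (Tconj_Tinv l) x⟩
  · apply Finsupp.lhom_ext
    intro p b
    obtain ⟨i, j⟩ := p
    simp only [Module.End.mul_apply, Hstd_single, Tconj_single]
    rcases lt_trichotomy i j with h | h | h
    · rw [if_neg h.ne, if_pos h, if_pos h, map_add, map_smul, map_smul,
        Tconj_single, Tconj_single, Hop_single]
      simp only [if_pos h, if_neg (not_lt.2 h.le)]
      rw [smul_add]
      simp only [smul_smul]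
      rw [aco_mul h, one_smul, mul_comm]
    · subst h
      rw [if_pos rfl, if_neg (lt_irrefl i), map_smul, Tconj_single,
        if_neg (lt_irrefl i), Hop_single]
      simp [aco_diag, lt_irrefl]
    · rw [if_neg h.ne', if_neg (not_lt.2 h.le), if_neg (not_lt.2 h.le),
        Tconj_single, if_pos h, Hop_single]
      simp [not_lt.2 h.le]


end
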